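/- arXiv:2409.15580 — 2 statements merged into one kernel-verified Lean document; each statement's English description precedes it below -/
import Mathlib

section
/- Let π : C̃ → C be a finite étale cover of degree 2 of smooth projective curves over a field k of characteristic 2. Then there is a short exact sequence of O_C-modules 0 → O_C → π_* O_{C̃} → O_C → 0, where the first map is the structure morphism π^#. -/
/-!
An étale algebra `B/A` has a separability idempotent `t ∈ B ⊗[A] B`: `(1 ⊗ s) t = (s ⊗ 1) t`
and `μ t = 1`. Expanding in a basis `(eⱼ)`, this identity turns `Tr x = ∑ⱼ eⱼ*(x eⱼ)` into
`xy = ∑ⱼ eⱼ*(x) eⱼ y`, so contracting `t` with the trace in the first factor gives `1`. It follows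
that every functional `f : B →ₗ[A] A` is `b ↦ Tr (c b)`, where `c` contracts `t` with `f` in the
second factor; in particular the trace is surjective, and then `A → B` is injective.

In rank `2` and characteristic `2`, `Tr 1 = 2 = 0`. Given `Tr y = 1`, the map
`b ↦ (Tr b, Tr (y b))` is a surjection `B → A²` between free modules of rank `2`, hence injective,
and an element `b` of trace `0` has the same image as the scalar `Tr (y b)`.
-/

open TensorProduct

section Contraction

variable {A B : Type*} [CommRing A] [CommRing B] [Algebra A B]

noncomputable def contractFst (f : B →ₗ[A] A) : B ⊗[A] B →ₗ[A] B :=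
  TensorProduct.lid A B ∘ₗ f.rTensor B

noncomputable def contractSnd (f : B →ₗ[A] A) : B ⊗[A] B →ₗ[A] B :=
  TensorProduct.rid A B ∘ₗ f.lTensor B

@[simp] lemma contractFst_tmul (f : B →ₗ[A] A) (x y : B) :
    contractFst f (x ⊗ₜ y) = f x • y := rfl

@[simp] lemma contractSnd_tmul (f : B →ₗ[A] A) (x y : B) :
    contractSnd f (x ⊗ₜ y) = f y • x := rfl

lemma contractFst_one_tmul_mul (f : B →ₗ[A] A) (s : B) (u : B ⊗[A] B) :
    contractFst f ((1 ⊗ₜ s) * u) = s * contractFst f u := by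
  induction u using TensorProduct.induction_on with
  | zero => simp
  | tmul x y => simp [mul_comm s y]
  | add u v hu hv => simp [mul_add, hu, hv]

lemma contractFst_tmul_one_mul (f : B →ₗ[A] A) (s : B) (u : B ⊗[A] B) :
    contractFst f ((s ⊗ₜ 1) * u) = contractFst (f ∘ₗ LinearMap.mulLeft A s) u := by
  induction u using TensorProduct.induction_on with
  | zero => simp
  | tmul x y => simp
  | add u v hu hv => simp [mul_add, hu, hv]

lemma trace_contractSnd_mul (f : B →ₗ[A] A) (b : B) (u : B ⊗[A] B) :
    Algebra.trace A B (contractSnd f u * b) = f (contractFst (Algebra.traceForm A B b) u) := by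
  induction u using TensorProduct.induction_on with
  | zero => simp
  | tmul x y => simp [mul_comm b x, mul_comm (f y)]
  | add u v hu hv => simp [add_mul, hu, hv]

variable {ι : Type*} [Fintype ι] (e : Module.Basis ι A B)

lemma Algebra.trace_eq_sum_repr_mul (x : B) :
    Algebra.trace A B x = ∑ j, e.repr (x * e j) j := by
  classical
  simp [Algebra.trace_eq_matrix_trace e x, Matrix.trace, Algebra.leftMulMatrix_eq_repr_mul]

lemma sum_contractFst_coord_one_tmul_mul (u : B ⊗[A] B) :
    ∑ j, contractFst (e.coord j) ((1 ⊗ₜ e j) * u) = Algebra.TensorProduct.lmul' A u := by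
  induction u using TensorProduct.induction_on with
  | zero => simp
  | tmul x y =>
    calc ∑ j, contractFst (e.coord j) ((1 ⊗ₜ e j) * (x ⊗ₜ y))
        = ∑ j, e.repr x j • (y * e j) := by simp [mul_comm]
      _ = y * x := by simp_rw [← mul_smul_comm, ← Finset.mul_sum, e.sum_repr]
      _ = x * y := mul_comm y x
  | add u v hu hv => simp only [mul_add, map_add, Finset.sum_add_distrib, hu, hv]

lemma sum_contractFst_coord_tmul_one_mul (u : B ⊗[A] B) :
    ∑ j, contractFst (e.coord j) ((e j ⊗ₜ 1) * u) = contractFst (Algebra.trace A B) u := by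
  induction u using TensorProduct.induction_on with
  | zero => simp
  | tmul x y =>
    simp [Algebra.trace_eq_sum_repr_mul e x, Finset.sum_smul, mul_comm x]
  | add u v hu hv => simp only [mul_add, map_add, Finset.sum_add_distrib, hu, hv]

end Contraction

namespace Algebra.FormallyUnramified

variable (A B : Type*) [CommRing A] [CommRing B] [Algebra A B]
  [FormallyUnramified A B] [EssFiniteType A B] [Module.Free A B]

lemma contractFst_trace_elem : contractFst (trace A B) (elem A B) = 1 := by
  classical
  have := finite_of_free A B
  let e := Module.Free.chooseBasis A B
  rw [← sum_contractFst_coord_tmul_one_mul e]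
  simp_rw [← one_tmul_mul_elem]
  rw [sum_contractFst_coord_one_tmul_mul, lmul_elem]

lemma contractFst_traceForm_elem (b : B) : contractFst (traceForm A B b) (elem A B) = b := by
  rw [show traceForm A B b = trace A B ∘ₗ LinearMap.mulLeft A b from rfl,
    ← contractFst_tmul_one_mul, ← one_tmul_mul_elem, contractFst_one_tmul_mul,
    contractFst_trace_elem, mul_one]

lemma traceForm_surjective : Function.Surjective (traceForm A B) := fun f ↦
  ⟨contractSnd f (elem A B), LinearMap.ext fun b ↦ by
    rw [traceForm_apply, trace_contractSnd_mul, contractFst_traceForm_elem]⟩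

lemma trace_surjective [Nontrivial B] : Function.Surjective (trace A B) := by
  have := finite_of_free A B
  let e := Module.Free.chooseBasis A B
  let i : Module.Free.ChooseBasisIndex A B := Classical.arbitrary _
  obtain ⟨c, hc⟩ := traceForm_surjective A B (e.coord i)
  refine fun a ↦ ⟨a • (c * e i), ?_⟩
  rw [map_smul, ← traceForm_apply, hc]
  simp

end Algebra.FormallyUnramified

lemma algebraMap_injective_of_linearMap_surjective {A B : Type*} [CommRing A] [CommRing B]
    [Algebra A B] {f : B →ₗ[A] A} (hf : Function.Surjective f) :
    Function.Injective (algebraMap A B) := by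
  obtain ⟨y, hy⟩ := hf 1
  refine (injective_iff_map_eq_zero _).mpr fun a ha ↦ ?_
  calc a = f (a • y) := by rw [map_smul, hy, smul_eq_mul, mul_one]
    _ = 0 := by rw [Algebra.smul_def, ha, zero_mul, map_zero]

lemma mem_range_algebraMap_of_trace_eq_zero {A B : Type*} [CommRing A] [CommRing B]
    [Algebra A B] [Module.Free A B] [Module.Finite A B] (hrank : Module.finrank A B ≤ 2)
    (hone : Algebra.trace A B 1 = 0) {y : B} (hy : Algebra.trace A B y = 1)
    {b : B} (hb : Algebra.trace A B b = 0) : b ∈ (algebraMap A B).range := by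
  cases subsingleton_or_nontrivial A
  · have := Module.subsingleton A B
    exact ⟨0, Subsingleton.elim _ _⟩
  let φ : B →ₗ[A] A × A := (Algebra.trace A B).prod (Algebra.traceForm A B y)
  have hφ : Function.Surjective φ := fun ⟨u, v⟩ ↦
    ⟨u • y + (v - u * Algebra.trace A B (y * y)) • 1, by
      simp [φ, Algebra.traceForm_apply, add_mul, hy, hone, mul_comm y]⟩
  have hφinj : Function.Injective φ :=
    (OrzechProperty.bijective_of_surjective_of_finrank_le φ hφ (by simpa using hrank)).1
  refine ⟨Algebra.trace A B (y * b), hφinj ?_⟩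
  simp [φ, Algebra.traceForm_apply, Algebra.algebraMap_eq_smul_one, hb, hone, hy, mul_comm y]

/-- Let `π : C̃ → C` be a finite étale cover of degree `2` of smooth
projective curves over a field of characteristic `2`.  Then there is a short exact
sequence of `O_C`-modules `0 → O_C → π_* O_{C̃} → O_C → 0`, where the first map is the
structure morphism `π^#`.

Exactness of a sequence of sheaves is a local statement, so we formalize the
affine-local (equivalently, ring-theoretic) version, which is valid over an arbitrary
base ring of characteristic `2`: if `B` is a finite étale `A`-algebra which is locally
free of rank `2` (in char `2`), then `0 → A → B → A → 0` is exact, where the first map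
is the structure map `algebraMap A B` and the second map realizing the quotient
`B/A ≅ A` is the trace `Tr_{B/A}` (this is precisely the Artin–Schreier trivialization
of the quotient line bundle used in the paper). -/
theorem artinSchreier_ses_of_etale_double_cover
    (A B : Type u) [CommRing A] [CommRing B] [Algebra A B] [CharP A 2]
    [Algebra.Etale A B] [Module.Free A B] (hrank : Module.finrank A B = 2) :
    Function.Injective (algebraMap A B) ∧
    Function.Surjective (Algebra.trace A B) ∧
    (∀ b : B, Algebra.trace A B b = 0 ↔ b ∈ (algebraMap A B).range) := by
  have := Algebra.FormallyUnramified.finite_of_free A B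
  have : Nontrivial A := CharP.nontrivial_of_char_ne_one (v := 2) (by norm_num)
  have : Nontrivial B := Module.nontrivial_of_finrank_pos (R := A) (by omega)
  have htrace_algebraMap (a : A) : Algebra.trace A B (algebraMap A B a) = 0 := by
    rw [Algebra.trace_algebraMap, hrank, two_nsmul, CharTwo.add_self_eq_zero]
  have hsurj := Algebra.FormallyUnramified.trace_surjective A B
  obtain ⟨y, hy⟩ := hsurj 1
  refine ⟨algebraMap_injective_of_linearMap_surjective hsurj, hsurj, fun b ↦ ⟨fun hb ↦ ?_, ?_⟩⟩
  · have hone : Algebra.trace A B 1 = 0 := by simpa using htrace_algebraMap 1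
    exact mem_range_algebraMap_of_trace_eq_zero hrank.le hone hy hb
  · rintro ⟨a, rfl⟩
    exact htrace_algebraMap a
end

section
/- Let k be a field of characteristic 2 and let X = V₊(f) ⊂ ℙ⁴_k be a smooth cubic threefold containing the line l = V₊(x₀, x₁, x₂), with f = u²x₀ + uv x₁ + v²x₂ + u Q₀ + v Q₁ + R where Q₀, Q₁ are quadratic and R is cubic in x₀, x₁, x₂ (writing u = x₃, v = x₄). Then the discriminant curve of the conic bundle obtained by projecting away from l is the plane quintic C = V₊(H) where H(y₀,y₁,y₂) = y₀ Q₁² + y₁² R + y₁ Q₀ Q₁ + y₂ Q₀², and if l is a good line then C is smooth. -/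
/-!
In characteristic 2 the polar form of a ternary quadratic form `q` is alternating, so the
gradient of `q` at `p` is the cross product `w × p` with a fixed vector `w`, the vertex. A
singular point of the conic `q = 0` is therefore proportional to `w`, and `q(w)` is the
discriminant (when `w = 0`, `q` is the square of a linear form and singular along a line). For
the fiber conic `K_y` the vertex is `w = (Q₁(y), Q₀(y), y₁)` and `q(w) = H(y)`.

If `C` were singular at `y`, then either `y₁ = 0`, where `∂₀H(y) = Q₁(y)²` and `∂₂H(y) = Q₀(y)²`
make all cross terms of `K_y` vanish, so that `K_y` is a double line and `l` is not good; or
`y₁ ≠ 0`, and the vertex of `K_y` is a singular point of `X`.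
-/

open MvPolynomial

noncomputable section

namespace Stmt17

variable {k : Type} [Field k]

/-- The inclusion of the variables `x₀, x₁, x₂` into the variables `x₀, …, x₄`. -/
def incl : Fin 3 → Fin 5 := Fin.castLE (by omega)

/-- The cubic form `f = u²x₀ + uv x₁ + v²x₂ + u Q₀ + v Q₁ + R` (with `u = x₃`,
`v = x₄`), whose vanishing defines a cubic threefold `X ⊂ ℙ⁴` containing the line
`l = V₊(x₀,x₁,x₂)`, in the normal form for a line not in `F₀(X)`. -/
def cubicForm (Q₀ Q₁ R : MvPolynomial (Fin 3) k) : MvPolynomial (Fin 5) k :=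
  X 3 ^ 2 * X 0 + X 3 * X 4 * X 1 + X 4 ^ 2 * X 2 +
    X 3 * rename incl Q₀ + X 4 * rename incl Q₁ + rename incl R

/-- For a point `T = [y₀:y₁:y₂]` of `ℙ²` (with coordinates in a field `K`), the conic
`K_T` residual to `l` in the 2-plane `P_T ∩ X` is defined by
`G_T(u,v,t) = u²y₀ + uv y₁ + v²y₂ + ut Q₀(y) + vt Q₁(y) + t² R(y)`,
in variables `u = X 0`, `v = X 1`, `t = X 2`. -/
def fiberConic (Q₀ Q₁ R : MvPolynomial (Fin 3) k) {K : Type} [Field K] [Algebra k K]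
    (y : Fin 3 → K) : MvPolynomial (Fin 3) K :=
  C (y 0) * X 0 ^ 2 + C (y 1) * X 0 * X 1 + C (y 2) * X 1 ^ 2 +
    C (aeval y Q₀) * X 0 * X 2 + C (aeval y Q₁) * X 1 * X 2 + C (aeval y R) * X 2 ^ 2

/-- The discriminant `H = y₀Q₁² + y₁²R + y₁Q₀Q₁ + y₂Q₀²` of the conic bundle. -/
def discriminant (Q₀ Q₁ R : MvPolynomial (Fin 3) k) : MvPolynomial (Fin 3) k :=
  X 0 * Q₁ ^ 2 + X 1 ^ 2 * R + X 1 * Q₀ * Q₁ + X 2 * Q₀ ^ 2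

def IsSingularPoint {σ R S : Type*} [CommSemiring R] [CommSemiring S] [Algebra R S]
    (F : MvPolynomial σ R) (a : σ → S) : Prop :=
  aeval a F = 0 ∧ ∀ i, aeval a (pderiv i F) = 0

theorem pderiv_rename_eq_zero {σ τ R : Type*} [CommSemiring R] {f : σ → τ} {j : τ}
    (hj : j ∉ Set.range f) (p : MvPolynomial σ R) : pderiv j (rename f p) = 0 := by
  classical
  refine pderiv_eq_zero_of_notMem_vars fun hvar ↦ hj ?_
  obtain ⟨i, -, rfl⟩ := mem_vars_rename f p hvar
  exact ⟨i, rfl⟩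

section TernaryQuadratic

open Matrix

variable {K : Type*} [Field K] (a b c d e f : K)

def ternaryQuadratic : MvPolynomial (Fin 3) K :=
  C a * X 0 ^ 2 + C b * X 0 * X 1 + C c * X 1 ^ 2 + C d * X 0 * X 2 + C e * X 1 * X 2 +
    C f * X 2 ^ 2

theorem aeval_ternaryQuadratic (p : Fin 3 → K) :
    aeval p (ternaryQuadratic a b c d e f) =
      a * p 0 ^ 2 + b * p 0 * p 1 + c * p 1 ^ 2 + d * p 0 * p 2 + e * p 1 * p 2 + f * p 2 ^ 2 := by
  simp [ternaryQuadratic]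

theorem aeval_smul_ternaryQuadratic (s : K) (p : Fin 3 → K) :
    aeval (s • p) (ternaryQuadratic a b c d e f) =
      s ^ 2 * aeval p (ternaryQuadratic a b c d e f) := by
  simp only [aeval_ternaryQuadratic, Pi.smul_apply, smul_eq_mul]
  ring

theorem aeval_pderiv_ternaryQuadratic [CharP K 2] (p : Fin 3 → K) :
    (fun i ↦ aeval p (pderiv i (ternaryQuadratic a b c d e f))) = ![e, d, b] ⨯₃ p := by
  ext i
  fin_cases i <;>
    simp [ternaryQuadratic, cross_apply, pderiv_X, CharTwo.two_eq_zero, CharTwo.sub_eq_add] <;> ring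

theorem isSingularPoint_ternaryQuadratic_iff [CharP K 2] (p : Fin 3 → K) :
    IsSingularPoint (ternaryQuadratic a b c d e f) p ↔
      aeval p (ternaryQuadratic a b c d e f) = 0 ∧ ![e, d, b] ⨯₃ p = 0 := by
  rw [← aeval_pderiv_ternaryQuadratic, funext_iff]
  rfl

theorem aeval_vertex_ternaryQuadratic [CharP K 2] :
    aeval ![e, d, b] (ternaryQuadratic a b c d e f) =
      a * e ^ 2 + b ^ 2 * f + b * d * e + c * d ^ 2 := by
  simp only [aeval_ternaryQuadratic, cons_val]
  linear_combination (b * d * e) * CharTwo.two_eq_zero (R := K)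

theorem discr_eq_zero_of_isSingularPoint_ternaryQuadratic [CharP K 2] {p : Fin 3 → K}
    (hp : p ≠ 0) (hsing : IsSingularPoint (ternaryQuadratic a b c d e f) p) :
    a * e ^ 2 + b ^ 2 * f + b * d * e + c * d ^ 2 = 0 := by
  obtain ⟨hqp, hcross⟩ := (isSingularPoint_ternaryQuadratic_iff a b c d e f p).1 hsing
  rw [← not_ne_iff, crossProduct_ne_zero_iff_linearIndependent,
    LinearIndependent.pair_iff] at hcross
  push Not at hcross
  obtain ⟨s, t, hst, hne⟩ := hcross
  have hs : s ≠ 0 := by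
    rintro rfl
    rw [zero_smul, zero_add, smul_eq_zero] at hst
    exact hne rfl (hst.resolve_right hp)
  have hvertex : s ^ 2 * aeval ![e, d, b] (ternaryQuadratic a b c d e f) = 0 := by
    rw [← aeval_smul_ternaryQuadratic, eq_neg_of_add_eq_zero_left hst, ← neg_smul,
      aeval_smul_ternaryQuadratic, hqp, mul_zero]
  rw [← aeval_vertex_ternaryQuadratic]
  exact (mul_eq_zero.1 hvertex).resolve_left (pow_ne_zero 2 hs)

theorem exists_isSingularPoint_ternaryQuadratic [CharP K 2] [IsAlgClosed K]
    (hdiscr : a * e ^ 2 + b ^ 2 * f + b * d * e + c * d ^ 2 = 0) :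
    ∃ p : Fin 3 → K, p ≠ 0 ∧ IsSingularPoint (ternaryQuadratic a b c d e f) p := by
  simp_rw [isSingularPoint_ternaryQuadratic_iff]
  by_cases hw : ![e, d, b] = 0
  · obtain ⟨he, hd, hb⟩ : e = 0 ∧ d = 0 ∧ b = 0 :=
      ⟨congrFun hw 0, congrFun hw 1, congrFun hw 2⟩
    simp_rw [hw, map_zero, LinearMap.zero_apply, and_true, aeval_ternaryQuadratic, hb, hd, he]
    by_cases ha : a = 0
    · exact ⟨![1, 0, 0], by simp, by simp [ha]⟩
    · obtain ⟨r, hr⟩ := IsAlgClosed.exists_pow_nat_eq (c / a) two_pos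
      refine ⟨![r, 1, 0], by simp, ?_⟩
      simp only [cons_val, hr]
      field_simp
      linear_combination c * CharTwo.two_eq_zero (R := K)
  · exact ⟨_, hw, by rwa [aeval_vertex_ternaryQuadratic], cross_self _⟩

theorem exists_isSingularPoint_ternaryQuadratic_iff [CharP K 2] [IsAlgClosed K] :
    (∃ p : Fin 3 → K, p ≠ 0 ∧ IsSingularPoint (ternaryQuadratic a b c d e f) p) ↔
      a * e ^ 2 + b ^ 2 * f + b * d * e + c * d ^ 2 = 0 :=
  ⟨fun ⟨_, hp, hsing⟩ ↦ discr_eq_zero_of_isSingularPoint_ternaryQuadratic a b c d e f hp hsing,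
    exists_isSingularPoint_ternaryQuadratic a b c d e f⟩

theorem ternaryQuadratic_eq_sq [CharP K 2] [IsAlgClosed K] :
    ∃ l : Fin 3 → K, ternaryQuadratic a 0 c 0 0 f = (∑ i, C (l i) * X i) ^ 2 := by
  obtain ⟨α, rfl⟩ := IsAlgClosed.exists_pow_nat_eq a two_pos
  obtain ⟨β, rfl⟩ := IsAlgClosed.exists_pow_nat_eq c two_pos
  obtain ⟨γ, rfl⟩ := IsAlgClosed.exists_pow_nat_eq f two_pos
  refine ⟨![α, β, γ], ?_⟩
  simp only [ternaryQuadratic, Fin.sum_univ_three, add_pow_char, mul_pow, map_pow, map_zero,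
    zero_mul, add_zero, cons_val]

end TernaryQuadratic

theorem cons_comp_incl {α : Type*} (y : Fin 3 → α) (u v : α) :
    ![y 0, y 1, y 2, u, v] ∘ incl = y := by
  ext i
  fin_cases i <;> rfl

section ConicBundle

variable (Q₀ Q₁ R : MvPolynomial (Fin 3) k) {K : Type} [Field K] [Algebra k K]

theorem fiberConic_eq_ternaryQuadratic (y : Fin 3 → K) :
    fiberConic Q₀ Q₁ R y =
      ternaryQuadratic (y 0) (y 1) (y 2) (aeval y Q₀) (aeval y Q₁) (aeval y R) :=
  rfl

theorem isHomogeneous_discriminant (hQ₀ : Q₀.IsHomogeneous 2) (hQ₁ : Q₁.IsHomogeneous 2)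
    (hR : R.IsHomogeneous 3) : (discriminant Q₀ Q₁ R).IsHomogeneous 5 :=
  ((((isHomogeneous_X k 0).mul (hQ₁.pow 2)).add (((isHomogeneous_X k 1).pow 2).mul hR)).add
    (((isHomogeneous_X k 1).mul hQ₀).mul hQ₁)).add ((isHomogeneous_X k 2).mul (hQ₀.pow 2))

theorem aeval_discriminant (y : Fin 3 → K) :
    aeval y (discriminant Q₀ Q₁ R) =
      y 0 * aeval y Q₁ ^ 2 + y 1 ^ 2 * aeval y R + y 1 * aeval y Q₀ * aeval y Q₁ +
        y 2 * aeval y Q₀ ^ 2 := by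
  simp [discriminant]

theorem aeval_pderiv_discriminant [CharP K 2] (y : Fin 3 → K) (i : Fin 3) :
    aeval y (pderiv i (discriminant Q₀ Q₁ R)) =
      ![aeval y Q₁ ^ 2, aeval y Q₀ * aeval y Q₁, aeval y Q₀ ^ 2] i +
        y 1 * (aeval y (pderiv i Q₀) * aeval y Q₁ + aeval y Q₀ * aeval y (pderiv i Q₁)) +
        y 1 ^ 2 * aeval y (pderiv i R) := by
  fin_cases i <;> simp [discriminant, pderiv_X, CharTwo.two_eq_zero] <;> ring

theorem aeval_cubicForm (y : Fin 3 → K) (u v : K) :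
    aeval ![y 0, y 1, y 2, u, v] (cubicForm Q₀ Q₁ R) =
      u ^ 2 * y 0 + u * v * y 1 + v ^ 2 * y 2 + u * aeval y Q₀ + v * aeval y Q₁ +
        aeval y R := by
  simp [cubicForm, aeval_rename, cons_comp_incl]

theorem aeval_pderiv_incl_cubicForm (y : Fin 3 → K) (u v : K) (i : Fin 3) :
    aeval ![y 0, y 1, y 2, u, v] (pderiv (incl i) (cubicForm Q₀ Q₁ R)) =
      ![u ^ 2, u * v, v ^ 2] i + u * aeval y (pderiv i Q₀) + v * aeval y (pderiv i Q₁) +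
        aeval y (pderiv i R) := by
  have hinj : Function.Injective incl := Fin.castLE_injective _
  fin_cases i <;>
    simp +decide [cubicForm, pderiv_rename hinj, aeval_rename, cons_comp_incl, pderiv_X,
      Pi.single_apply]

theorem aeval_pderiv_three_cubicForm [CharP K 2] (y : Fin 3 → K) (u v : K) :
    aeval ![y 0, y 1, y 2, u, v] (pderiv 3 (cubicForm Q₀ Q₁ R)) = y 1 * v + aeval y Q₀ := by
  have h3 : (3 : Fin 5) ∉ Set.range incl := by rintro ⟨i, hi⟩; fin_cases i <;> cases hi
  simp +decide [cubicForm, pderiv_rename_eq_zero h3, aeval_rename, cons_comp_incl, pderiv_X,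
    CharTwo.two_eq_zero]

theorem aeval_pderiv_four_cubicForm [CharP K 2] (y : Fin 3 → K) (u v : K) :
    aeval ![y 0, y 1, y 2, u, v] (pderiv 4 (cubicForm Q₀ Q₁ R)) = y 1 * u + aeval y Q₁ := by
  have h4 : (4 : Fin 5) ∉ Set.range incl := by rintro ⟨i, hi⟩; fin_cases i <;> cases hi
  simp +decide [cubicForm, pderiv_rename_eq_zero h4, aeval_rename, cons_comp_incl, pderiv_X,
    CharTwo.two_eq_zero]

theorem aeval_eq_zero_of_isSingularPoint_discriminant [CharP K 2] {y : Fin 3 → K}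
    (hy1 : y 1 = 0) (hsing : IsSingularPoint (discriminant Q₀ Q₁ R) y) :
    aeval y Q₀ = 0 ∧ aeval y Q₁ = 0 := by
  constructor
  · simpa [aeval_pderiv_discriminant, hy1] using hsing.2 2
  · simpa [aeval_pderiv_discriminant, hy1] using hsing.2 0

/-- The point is the vertex `(Q₁(y) : Q₀(y) : y₁)` of `K_y` in the chart `t = 1` of `P_y`. There
`y₁² f` and `y₁² ∂ᵢf` (`i < 3`) equal `H(y)` and `∂ᵢH(y)`, while `∂ᵤf` and `∂ᵥf` are the
derivatives of `G_y` at its vertex. -/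
theorem isSingularPoint_cubicForm_of_discriminant [CharP K 2] {y : Fin 3 → K} (hy1 : y 1 ≠ 0)
    (hsing : IsSingularPoint (discriminant Q₀ Q₁ R) y) :
    IsSingularPoint (cubicForm Q₀ Q₁ R)
      ![y 0, y 1, y 2, aeval y Q₁ / y 1, aeval y Q₀ / y 1] := by
  obtain ⟨hH, hdH⟩ := hsing
  have two : (2 : K) = 0 := CharTwo.two_eq_zero
  have hincl (i : Fin 3) : aeval ![y 0, y 1, y 2, aeval y Q₁ / y 1, aeval y Q₀ / y 1]
      (pderiv (incl i) (cubicForm Q₀ Q₁ R)) = 0 := by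
    have := hdH i
    rw [aeval_pderiv_discriminant] at this
    rw [aeval_pderiv_incl_cubicForm]
    fin_cases i <;>
      simp only [Fin.zero_eta, Fin.mk_one, Fin.reduceFinMk, Matrix.cons_val] at this ⊢ <;>
      field_simp <;> linear_combination this
  refine ⟨?_, fun j ↦ ?_⟩
  · rw [aeval_cubicForm]
    rw [aeval_discriminant] at hH
    field_simp
    linear_combination hH + y 1 * aeval y Q₀ * aeval y Q₁ * two
  · fin_cases j
    · exact hincl 0
    · exact hincl 1
    · exact hincl 2
    · refine (aeval_pderiv_three_cubicForm Q₀ Q₁ R y _ _).trans ?_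
      rw [mul_div_cancel₀ _ hy1]
      linear_combination aeval y Q₀ * two
    · refine (aeval_pderiv_four_cubicForm Q₀ Q₁ R y _ _).trans ?_
      rw [mul_div_cancel₀ _ hy1]
      linear_combination aeval y Q₁ * two

end ConicBundle

/-- Let `char k = 2` and let `X = V₊(f) ⊂ ℙ⁴` be a smooth cubic
threefold containing the line `l = V₊(x₀,x₁,x₂)`, with
`f = u²x₀ + uvx₁ + v²x₂ + uQ₀ + vQ₁ + R` (`Q₀, Q₁` quadratic, `R` cubic in
`x₀,x₁,x₂`).  Then the discriminant curve of the conic bundle obtained by projecting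
away from `l` is the plane quintic `C = V₊(H)` with
`H = y₀Q₁² + y₁²R + y₁Q₀Q₁ + y₂Q₀²` — i.e. `H` vanishes at a point `y ≠ 0` over the
algebraic closure exactly when the fiber conic `K_y` is singular — and if `l` is a
good line (no fiber conic is a double line, i.e. `l ∉ F₁(X)`; `l ∉ F₀(X)` holds by the
normal form), then `C` is smooth. -/
theorem discriminant_eq_and_smooth [CharP k 2]
    (Q₀ Q₁ R : MvPolynomial (Fin 3) k)
    (hQ₀ : Q₀.IsHomogeneous 2) (hQ₁ : Q₁.IsHomogeneous 2) (hR : R.IsHomogeneous 3)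
    -- `X` is smooth (Jacobian criterion over the algebraic closure):
    (hXsmooth : ∀ a : Fin 5 → AlgebraicClosure k, a ≠ 0 →
      ¬ (aeval a (cubicForm Q₀ Q₁ R) = 0 ∧
          ∀ i : Fin 5, aeval a (pderiv i (cubicForm Q₀ Q₁ R)) = 0))
    -- `l` is a good line: no fiber conic is a double line:
    (hgood : ∀ y : Fin 3 → AlgebraicClosure k, y ≠ 0 →
      ¬ ∃ l : Fin 3 → AlgebraicClosure k,
          fiberConic Q₀ Q₁ R y = (∑ i : Fin 3, C (l i) * X i) ^ 2) :
    -- (1) `V₊(H)` is the discriminant locus of the conic bundle: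
    (∀ y : Fin 3 → AlgebraicClosure k, y ≠ 0 →
      (aeval y (discriminant Q₀ Q₁ R) = 0 ↔
        ∃ p : Fin 3 → AlgebraicClosure k, p ≠ 0 ∧
          aeval p (fiberConic Q₀ Q₁ R y) = 0 ∧
          ∀ i : Fin 3, aeval p (pderiv i (fiberConic Q₀ Q₁ R y)) = 0)) ∧
    -- (2) the discriminant curve `C = V₊(H)` is a smooth plane quintic:
    (discriminant Q₀ Q₁ R).IsHomogeneous 5 ∧
    (∀ y : Fin 3 → AlgebraicClosure k, y ≠ 0 →
      ¬ (aeval y (discriminant Q₀ Q₁ R) = 0 ∧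
          ∀ i : Fin 3, aeval y (pderiv i (discriminant Q₀ Q₁ R)) = 0)) := by
  refine ⟨fun y _ ↦ ?_, isHomogeneous_discriminant Q₀ Q₁ R hQ₀ hQ₁ hR, fun y hy hsing ↦ ?_⟩
  · rw [aeval_discriminant, fiberConic_eq_ternaryQuadratic]
    exact (exists_isSingularPoint_ternaryQuadratic_iff ..).symm
  · by_cases hy1 : y 1 = 0
    · obtain ⟨hQ₀y, hQ₁y⟩ := aeval_eq_zero_of_isSingularPoint_discriminant Q₀ Q₁ R hy1 hsing
      apply hgood y hy
      rw [fiberConic_eq_ternaryQuadratic, hy1, hQ₀y, hQ₁y]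
      exact ternaryQuadratic_eq_sq ..
    · exact hXsmooth _ (fun h ↦ hy1 (congrFun h 1))
        (isSingularPoint_cubicForm_of_discriminant Q₀ Q₁ R hy1 hsing)

end Stmt17
end
end
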